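/- arXiv:2312.08489 — 9 statements merged into one kernel-verified Lean document; each statement's English description precedes it below -/
import Mathlib

section
/- Let T be a DFS tree of a connected graph G rooted at r, and let X be a set of failed vertices with r ∉ X. Let C be a connected component of T \ X. Then C consists of a contiguous interval of DFS numbers minus the subtrees rooted at its boundary vertices; formally, if r_C is the root of C and f_1 < f_2 < ... < f_k are the boundary vertices of C (failed vertices whose T-parent lies in C), then, identifying vertices with their DFS numbers, C = [r_C, r_C + ND(r_C) − 1] \ (⋃_{i=1}^{k} [f_i, f_i + ND(f_i) − 1]). -/
/-- `a` is an ancestor of `b` with respect to the parent function `p`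
(a vertex is an ancestor of itself). -/
def IsAnc {V : Type*} (p : V → V) (a b : V) : Prop :=
  Relation.ReflTransGen (fun x y => p x = y) b a

/-- A DFS (depth-first search) tree of a graph `G`, rooted at `r`, given by a parent
function, DFS (preorder) numbers `num` and descendant counts `nd`.  The field
`dfs_prop` is the defining property of depth-first search: every neighbor of a
vertex `u` that is discovered after `u` is discovered inside the subtree of `u`. -/
structure DFSTree {V : Type*} [Fintype V] (G : SimpleGraph V) (r : V) where
  parent : V → V
  num : V → ℕ
  nd : V → ℕ
  parent_root : parent r = r
  num_inj : Function.Injective num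
  num_lt_card : ∀ v, num v < Fintype.card V
  num_root : num r = 0
  parent_adj : ∀ v, v ≠ r → G.Adj (parent v) v
  parent_num : ∀ v, v ≠ r → num (parent v) < num v
  reach_root : ∀ v, IsAnc parent r v
  nd_def : ∀ v, Set.ncard {u | IsAnc parent v u} = nd v
  subtree_interval : ∀ u v, IsAnc parent u v ↔ (num u ≤ num v ∧ num v < num u + nd u)
  dfs_prop : ∀ u w, G.Adj u w → num u < num w → num w < num u + nd u

/-- The graph `G` with the vertices of `X` deleted (kept as isolated vertices). -/
def delVerts {V : Type*} (G : SimpleGraph V) (X : Set V) : SimpleGraph V :=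
  SimpleGraph.fromRel (fun x y => G.Adj x y ∧ x ∉ X ∧ y ∉ X)

/-- The tree `T`, regarded as a graph (edges between a vertex and its parent). -/
def treeGraph {V : Type*} (p : V → V) : SimpleGraph V :=
  SimpleGraph.fromRel (fun x y => p x = y)

/-- `C` is a connected component of `H \ X`. -/
def IsCompOf {V : Type*} (H : SimpleGraph V) (X : Set V) (C : Set V) : Prop :=
  ∃ v, v ∉ X ∧ C = {u | (delVerts H X).Reachable u v}

/-- `rc` is the root of the component `C`: a member that is a `p`-ancestor of all of `C`. -/
def IsRootOf {V : Type*} (p : V → V) (C : Set V) (rc : V) : Prop :=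
  rc ∈ C ∧ ∀ u ∈ C, IsAnc p rc u

/-- A component `C` of `T \ X` is internal if some failed vertex of `X` is a
descendant of a vertex of `C`; otherwise it is a hanging subtree. -/
def IsInternal {V : Type*} (p : V → V) (X C : Set V) : Prop :=
  ∃ f ∈ X, ∃ c ∈ C, IsAnc p c f

/-- `C'` is an ancestor of `C` (some vertex of `C` is a descendant of some vertex of `C'`). -/
def CompAnc {V : Type*} (p : V → V) (C' C : Set V) : Prop :=
  ∃ a ∈ C', ∃ b ∈ C, IsAnc p a b

/-- `f` is a boundary vertex of the component `C`: a failed vertex whose parent lies in `C`. -/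
def IsBoundary {V : Type*} (p : V → V) (X C : Set V) (f : V) : Prop :=
  f ∈ X ∧ p f ∈ C


lemma delVerts_adj' {V : Type*} {H : SimpleGraph V} {X : Set V} {x y : V}
    (h : (delVerts H X).Adj x y) : x ∉ X ∧ y ∉ X ∧ H.Adj x y := by
  rw [delVerts, SimpleGraph.fromRel_adj] at h
  obtain ⟨hne, h | h⟩ := h
  · exact ⟨h.2.1, h.2.2, h.1⟩
  · exact ⟨h.2.2, h.2.1, h.1.symm⟩

lemma treeGraph_adj' {V : Type*} {p : V → V} {x y : V} (h : (treeGraph p).Adj x y) :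
    p x = y ∨ p y = x := by
  rw [treeGraph, SimpleGraph.fromRel_adj] at h; exact h.2

lemma walk_closed {V : Type*} {H : SimpleGraph V} {S : Set V}
    (hS : ∀ x y, H.Adj x y → x ∈ S → y ∈ S) :
    ∀ {a b : V}, H.Walk a b → a ∈ S → b ∈ S
  | _, _, SimpleGraph.Walk.nil, ha => ha
  | _, _, SimpleGraph.Walk.cons h q, ha => walk_closed hS q (hS _ _ h ha)

lemma reach_closed {V : Type*} {H : SimpleGraph V} {S : Set V}
    (hS : ∀ x y, H.Adj x y → x ∈ S → y ∈ S) {a b : V}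
    (h : H.Reachable a b) (ha : a ∈ S) : b ∈ S :=
  h.elim (fun w => walk_closed hS w ha)

lemma reach_notX {V : Type*} {H : SimpleGraph V} {X : Set V} {u v : V}
    (h : (delVerts H X).Reachable u v) (hv : v ∉ X) : u ∉ X := by
  obtain ⟨w⟩ := h
  cases w with
  | nil => exact hv
  | cons h _ => exact (delVerts_adj' h).1

/-- A connected component `C` of `T \ X` consists of the DFS interval of its root
minus the subtrees rooted at the boundary vertices of `C`. -/
theorem component_eq_interval_minus_boundary_subtrees {V : Type*} [Fintype V] [DecidableEq V]
    (G : SimpleGraph V) (hG : G.Connected) (r : V) (T : DFSTree G r)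
    (X : Set V) (hr : r ∉ X) (C : Set V) (rc : V)
    (hC : IsCompOf (treeGraph T.parent) X C) (hrc : IsRootOf T.parent C rc) :
    C = {u | (T.num rc ≤ T.num u ∧ T.num u < T.num rc + T.nd rc) ∧
          ∀ f, IsBoundary T.parent X C f →
            ¬ (T.num f ≤ T.num u ∧ T.num u < T.num f + T.nd f)} := by
  obtain ⟨v, hvX, hCdef⟩ := hC
  have memC : ∀ w, w ∈ C ↔ (delVerts (treeGraph T.parent) X).Reachable w v := by
    intro w; rw [hCdef]; exact Iff.rfl
  have notX : ∀ w ∈ C, w ∉ X := fun w hw => reach_notX ((memC w).mp hw) hvX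
  have Cclosed : ∀ x y, (delVerts (treeGraph T.parent) X).Adj x y → x ∈ C → y ∈ C := by
    intro x y hxy hx
    exact (memC y).mpr (hxy.symm.reachable.trans ((memC x).mp hx))
  have rcC := hrc.1
  have anc_rc := hrc.2
  have root_anc : ∀ a, IsAnc T.parent a r → a = r := by
    intro a h
    induction h with
    | refl => rfl
    | tail h step ih => rw [← step, ih, T.parent_root]
  have anc_antisym : ∀ a b, IsAnc T.parent a b → IsAnc T.parent b a → a = b := by
    intro a b h1 h2
    have n1 := ((T.subtree_interval a b).mp h1).1
    have n2 := ((T.subtree_interval b a).mp h2).1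
    exact T.num_inj (le_antisymm n1 n2)
  have lemM : ∀ u ∈ C, u ≠ rc → T.parent u ∈ C := by
    intro u hu hne
    have huX : u ∉ X := notX u hu
    have hur : u ≠ r := by
      intro h
      apply hne
      have h1 : IsAnc T.parent rc r := h ▸ anc_rc u hu
      rw [h, root_anc rc h1]
    have hpu : T.parent u ≠ u := by
      intro h
      have hl := T.parent_num u hur
      rw [h] at hl
      exact lt_irrefl _ hl
    by_cases hpX : T.parent u ∈ X
    · exfalso
      have hclosed : ∀ x y, (delVerts (treeGraph T.parent) X).Adj x y →
          x ∈ {w | IsAnc T.parent u w} → y ∈ {w | IsAnc T.parent u w} := by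
        intro x y hxy hx
        obtain ⟨hxX, hyX, hadj⟩ := delVerts_adj' hxy
        rcases treeGraph_adj' hadj with h | h
        · rcases Relation.ReflTransGen.cases_head hx with heq | ⟨c, hc, hcu⟩
          · exfalso; apply hyX; rw [← h, heq]; exact hpX
          · obtain rfl : y = c := by rw [← h, hc]
            exact hcu
        · exact Relation.ReflTransGen.head h hx
      have hreach : (delVerts (treeGraph T.parent) X).Reachable u rc :=
        ((memC u).mp hu).trans ((memC rc).mp rcC).symm
      have hrcS : IsAnc T.parent u rc :=
        reach_closed hclosed hreach Relation.ReflTransGen.refl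
      exact hne (anc_antisym u rc hrcS (anc_rc u hu))
    · have hadj : (delVerts (treeGraph T.parent) X).Adj u (T.parent u) := by
        rw [delVerts, SimpleGraph.fromRel_adj]
        refine ⟨Ne.symm hpu, Or.inl ⟨?_, huX, hpX⟩⟩
        rw [treeGraph, SimpleGraph.fromRel_adj]
        exact ⟨Ne.symm hpu, Or.inl rfl⟩
      exact Cclosed u (T.parent u) hadj hu
  have claimA : ∀ u ∈ C, ∀ w, IsAnc T.parent w u → w ∈ C ∨ IsAnc T.parent w rc := by
    intro u hu w hw
    induction hw with
    | refl => exact Or.inl hu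
    | @tail b c h step ih =>
      rcases ih with hc | hc
      · by_cases hceq : b = rc
        · right; exact Relation.ReflTransGen.single (hceq ▸ step)
        · left; rw [← step]; exact lemM b hc hceq
      · right; exact hc.tail step
  ext u
  simp only [Set.mem_setOf_eq]
  constructor
  · intro hu
    refine ⟨(T.subtree_interval rc u).mp (anc_rc u hu), ?_⟩
    rintro f ⟨hfX, hpfC⟩ hnum
    have hfu : IsAnc T.parent f u := (T.subtree_interval f u).mpr hnum
    rcases claimA u hu f hfu with hfC | hfrc
    · exact notX f hfC hfX
    · have h1 : IsAnc T.parent rc (T.parent f) := anc_rc _ hpfC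
      have h2 : IsAnc T.parent f (T.parent f) := Relation.ReflTransGen.trans h1 hfrc
      have hfr : f ≠ r := fun h => hr (h ▸ hfX)
      have hn1 := T.parent_num f hfr
      have hn2 := ((T.subtree_interval f (T.parent f)).mp h2).1
      omega
  · rintro ⟨hint, hbd⟩
    have hrcu : IsAnc T.parent rc u := (T.subtree_interval rc u).mpr hint
    have claimB : ∀ a, Relation.ReflTransGen (fun x y => T.parent x = y) a rc →
        IsAnc T.parent a u → a ∈ C := by
      intro a h
      induction h using Relation.ReflTransGen.head_induction_on with
      | refl => exact fun _ => rcC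
      | @head a b step htl ih =>
        intro hau
        have hbu : IsAnc T.parent b u := hau.tail step
        have hbC : b ∈ C := ih hbu
        by_cases hab : T.parent a = a
        · rw [← hab, step]; exact hbC
        · have haX : a ∉ X := by
            intro haX
            refine hbd a ⟨haX, ?_⟩ ((T.subtree_interval a u).mp hau)
            rw [step]; exact hbC
          have hbX : b ∉ X := notX b hbC
          have hadj : (delVerts (treeGraph T.parent) X).Adj b a := by
            rw [delVerts, SimpleGraph.fromRel_adj]
            refine ⟨fun h => hab (by rw [step, h]), Or.inr ⟨?_, haX, hbX⟩⟩
            rw [treeGraph, SimpleGraph.fromRel_adj]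
            exact ⟨fun h => hab (by rw [step, ← h]), Or.inl step⟩
          exact Cclosed b a hadj hbC
    exact claimB u hrcu Relation.ReflTransGen.refl
end

section
/- Let T be a DFS tree of a connected graph G rooted at r, let X be a set of failed vertices with r ∉ X, and let C be an internal component of T \ X (i.e., some vertex of X is a descendant of a vertex of C). For every vertex v that is a descendant in T of some vertex of C but v ∉ C, there is a unique boundary vertex of C that is an ancestor of v. -/
section Helpers

variable {V : Type*} (p : V → V) (X : Set V)

lemma delAdj_iff (u w : V) :
    (delVerts (treeGraph p) X).Adj u w ↔
      u ≠ w ∧ u ∉ X ∧ w ∉ X ∧ (p u = w ∨ p w = u) := by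
  simp only [delVerts, treeGraph, SimpleGraph.fromRel_adj]
  tauto

/-- A component of `T \ X` is disjoint from `X`. -/
lemma comp_disj {C : Set V} (hC : IsCompOf (treeGraph p) X C) : ∀ u ∈ C, u ∉ X := by
  obtain ⟨v0, hv0, rfl⟩ := hC
  intro u hu huX
  rcases ((SimpleGraph.reachable_iff_reflTransGen _ _).1 hu).cases_head with h | ⟨c, hc, _⟩
  · exact hv0 (h ▸ huX)
  · exact ((delAdj_iff p X u c).1 hc).2.1 huX

/-- Strict descendants of a failed vertex are closed under reachability in `T \ X`. -/
lemma strict_desc_closed {f u w : V} (hf : f ∈ X)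
    (hr : (delVerts (treeGraph p) X).Reachable u w)
    (hu : IsAnc p f u ∧ u ≠ f) : IsAnc p f w ∧ w ≠ f := by
  have h := (SimpleGraph.reachable_iff_reflTransGen _ _).1 hr
  clear hr
  induction h with
  | refl => exact hu
  | tail _ hadj ih =>
    rename_i b c _
    obtain ⟨hne, hbX, hcX, hpc⟩ := (delAdj_iff p X b c).1 hadj
    obtain ⟨hanc, hbf⟩ := ih
    refine ⟨?_, fun h => hcX (h ▸ hf)⟩
    rcases hpc with h | h
    · -- p b = c : chain b → f is nonempty since b ≠ f, so passes through p b = c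
      rcases Relation.ReflTransGen.cases_head hanc with h' | ⟨d, hd, hdf⟩
      · exact absurd h' hbf
      · exact (hd.symm.trans h) ▸ hdf
    · -- p c = b : extend the chain
      exact Relation.ReflTransGen.head h hanc

end Helpers

/-- For an internal component `C` of `T \ X` and any vertex `v` that is a descendant of a
vertex of `C` but does not lie in `C`, there is a unique boundary vertex of `C`
that is an ancestor of `v`. -/
theorem unique_boundary_ancestor {V : Type*} [Fintype V] [DecidableEq V]
    (G : SimpleGraph V) (hG : G.Connected) (r : V) (T : DFSTree G r)
    (X : Set V) (hr : r ∉ X) (C : Set V)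
    (hC : IsCompOf (treeGraph T.parent) X C) (hint : IsInternal T.parent X C)
    (v : V) (hv : v ∉ C) (hdesc : ∃ c ∈ C, IsAnc T.parent c v) :
    ∃! f, IsBoundary T.parent X C f ∧ IsAnc T.parent f v := by
  obtain ⟨v0, hv0X, hCdef⟩ := hC
  have hdisj : ∀ u ∈ C, u ∉ X := comp_disj T.parent X ⟨v0, hv0X, hCdef⟩
  obtain ⟨c, hcC, hcv⟩ := hdesc
  -- Existence
  have exist : ∀ w, w ∉ C → Relation.ReflTransGen (fun x y => T.parent x = y) w c →
      ∃ f, (IsBoundary T.parent X C f ∧ IsAnc T.parent f w) := by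
    intro w hw hwc
    induction hwc using Relation.ReflTransGen.head_induction_on with
    | refl => exact absurd hcC hw
    | head hstep htail ih =>
      rename_i a b
      by_cases hbC : b ∈ C
      · -- a ∉ C, parent a = b ∈ C; show a ∈ X
        have haX : a ∈ X := by
          by_contra haX
          have hne : a ≠ b := fun h => hw (h ▸ hbC)
          have : (delVerts (treeGraph T.parent) X).Adj a b :=
            (delAdj_iff T.parent X a b).2 ⟨hne, haX, hdisj b hbC, Or.inl hstep⟩
          apply hw
          rw [hCdef] at hbC ⊢
          exact this.reachable.trans hbC
        exact ⟨a, ⟨haX, hstep ▸ hbC⟩, Relation.ReflTransGen.refl⟩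
      · obtain ⟨f, hfb, hanc⟩ := ih hbC
        exact ⟨f, hfb, Relation.ReflTransGen.head hstep hanc⟩
  obtain ⟨f, hf⟩ := exist v hv hcv
  refine ⟨f, hf, ?_⟩
  -- Uniqueness: show any boundary ancestor g of v equals f
  have key : ∀ f₁ f₂, IsBoundary T.parent X C f₁ → IsAnc T.parent f₁ v →
      IsBoundary T.parent X C f₂ → IsAnc T.parent f₂ v →
      T.num f₁ ≤ T.num f₂ → f₁ = f₂ := by
    intro f₁ f₂ hb₁ ha₁ hb₂ ha₂ hle
    by_contra hne
    have hanc12 : IsAnc T.parent f₁ f₂ := by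
      rw [T.subtree_interval]
      have h1 := (T.subtree_interval f₁ v).1 ha₁
      have h2 := (T.subtree_interval f₂ v).1 ha₂
      exact ⟨hle, lt_of_le_of_lt h2.1 h1.2⟩
    -- f₁ is an ancestor of parent f₂
    have hanc1p2 : IsAnc T.parent f₁ (T.parent f₂) := by
      rcases Relation.ReflTransGen.cases_head hanc12 with h | ⟨d, hd, hdf⟩
      · exact absurd h.symm hne
      · exact hd ▸ hdf
    have hp2ne : T.parent f₂ ≠ f₁ := fun h => hdisj _ hb₂.2 (h ▸ hb₁.1)
    -- parent f₁ and parent f₂ both in C, hence reachable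
    have hreach : (delVerts (treeGraph T.parent) X).Reachable (T.parent f₂) (T.parent f₁) := by
      have h1 := hb₁.2; have h2 := hb₂.2
      rw [hCdef] at h1 h2
      exact h2.trans h1.symm
    have := strict_desc_closed T.parent X hb₁.1 hreach ⟨hanc1p2, hp2ne⟩
    -- but parent f₁ is not a descendant of f₁
    have hf1r : f₁ ≠ r := fun h => hr (h ▸ hb₁.1)
    have := (T.subtree_interval f₁ (T.parent f₁)).1 this.1
    exact absurd this.1 (not_le.2 (T.parent_num f₁ hf1r))
  intro g hg
  rcases le_total (T.num g) (T.num f) with h | h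
  · exact key g f hg.1 hg.2 hf.1 hf.2 h
  · exact (key f g hf.1 hf.2 hg.1 hg.2 h).symm
end

section
/- Let T be a DFS tree of a connected graph G rooted at r, and let X be a set of failed vertices with r ∉ X. A connected component C of T \ X is a hanging subtree (no vertex of X is a descendant of C) if and only if C equals the full subtree T(r_C) rooted at its root r_C, i.e., C = [r_C, r_C + ND(r_C) − 1] in DFS numbering. -/
lemma IsAnc.trans {V : Type*} {p : V → V} {a b c : V}
    (h1 : IsAnc p a b) (h2 : IsAnc p b c) : IsAnc p a c :=
  Relation.ReflTransGen.trans h2 h1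

lemma mem_comp_not_mem {V : Type*} (H : SimpleGraph V) (X : Set V) {v u : V}
    (hv : v ∉ X) (h : (delVerts H X).Reachable u v) : u ∉ X := by
  obtain ⟨w⟩ := h
  cases w with
  | nil => exact hv
  | cons h q =>
      simp only [delVerts, SimpleGraph.fromRel_adj] at h
      rcases h.2 with ⟨_, hx, _⟩ | ⟨_, _, hx⟩ <;> exact hx

/-- A connected component `C` of `T \ X` is a hanging subtree (not internal) if and only if
it is the full subtree of its root, i.e. the DFS interval `[num r_C, num r_C + ND(r_C))`. -/
theorem hanging_iff_full_subtree {V : Type*} [Fintype V] [DecidableEq V]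
    (G : SimpleGraph V) (hG : G.Connected) (r : V) (T : DFSTree G r)
    (X : Set V) (hr : r ∉ X) (C : Set V) (rc : V)
    (hC : IsCompOf (treeGraph T.parent) X C) (hrc : IsRootOf T.parent C rc) :
    ¬ IsInternal T.parent X C ↔
      C = {u | T.num rc ≤ T.num u ∧ T.num u < T.num rc + T.nd rc} := by
  obtain ⟨v, hv, hCeq⟩ := hC
  have hCX : ∀ u ∈ C, u ∉ X := by
    intro u hu
    rw [hCeq] at hu
    exact mem_comp_not_mem _ _ hv hu
  constructor
  · intro hni
    ext u
    simp only [Set.mem_setOf_eq, ← T.subtree_interval]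
    constructor
    · intro hu; exact hrc.2 u hu
    · intro hanc
      -- hanc : IsAnc p rc u, i.e. ReflTransGen step u rc
      unfold IsAnc at hanc
      rw [hCeq]
      induction hanc using Relation.ReflTransGen.head_induction_on with
      | refl => exact hCeq ▸ hrc.1
      | @head x y hstep htail ih =>
          -- hstep : T.parent x = y, htail : ReflTransGen _ y rc, ih : y ∈ ...
          have hxX : x ∉ X := by
            intro hx
            exact hni ⟨x, hx, rc, hrc.1, Relation.ReflTransGen.head hstep htail⟩
          by_cases hxy : x = y
          · rwa [hxy]
          · have hadj : (delVerts (treeGraph T.parent) X).Adj x y := by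
              simp only [delVerts, SimpleGraph.fromRel_adj]
              refine ⟨hxy, Or.inl ⟨?_, hxX, hCX y ?_⟩⟩
              · simp only [treeGraph, SimpleGraph.fromRel_adj]
                exact ⟨hxy, Or.inl hstep⟩
              · rw [hCeq]; exact ih
            exact hadj.reachable.trans ih
  · intro hEq hint
    obtain ⟨f, hf, c, hc, hanc⟩ := hint
    have h1 : IsAnc T.parent rc c := hrc.2 c hc
    have h2 : IsAnc T.parent rc f := IsAnc.trans h1 hanc
    have : f ∈ C := by
      rw [hEq]
      exact (T.subtree_interval rc f).mp h2
    exact hCX f this hf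
end

section
/- Let T be a DFS tree of a connected graph G rooted at r, let X be a set of failed vertices with r ∉ X, and let f ∈ X. Define parent_F(f) to be the nearest strict T-ancestor of f that belongs to X (or null if none exists). Then f is a boundary vertex of some internal component of T \ X if and only if parent_F(f) ≠ p_T(f), i.e., the T-parent of f is not itself a failed vertex. -/
lemma mem_X_eq_of_reachable {V : Type*} (H : SimpleGraph V) (X : Set V) {u v : V}
    (hu : u ∈ X) (h : (delVerts H X).Reachable u v) : u = v := by
  obtain ⟨w⟩ := h
  cases w with
  | nil => rfl
  | cons h p =>
    rw [delVerts, SimpleGraph.fromRel_adj] at h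
    exact absurd hu (by tauto)

/-- A failed vertex `f ∈ X` is a boundary vertex of some internal component of `T \ X`
if and only if its parent in `T` is not itself a failed vertex (equivalently, the nearest
strict `T`-ancestor of `f` lying in `X` is not equal to `p_T(f)`). -/
theorem boundary_iff_parent_not_failed {V : Type*} [Fintype V] [DecidableEq V]
    (G : SimpleGraph V) (hG : G.Connected) (r : V) (T : DFSTree G r)
    (X : Set V) (hr : r ∉ X) (f : V) (hf : f ∈ X) :
    (∃ C : Set V, IsCompOf (treeGraph T.parent) X C ∧ IsInternal T.parent X C ∧
        IsBoundary T.parent X C f) ↔ T.parent f ∉ X := by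
  constructor
  · rintro ⟨C, ⟨v, hv, rfl⟩, _, _, hpf⟩ hpX
    exact hv ((mem_X_eq_of_reachable _ _ hpX hpf) ▸ hpX)
  · intro hpX
    exact ⟨{u | (delVerts (treeGraph T.parent) X).Reachable u (T.parent f)},
      ⟨T.parent f, hpX, rfl⟩,
      ⟨f, hf, T.parent f, SimpleGraph.Reachable.refl _, Relation.ReflTransGen.single rfl⟩,
      hf, SimpleGraph.Reachable.refl _⟩
end

section
/- Let T be a DFS tree of a connected graph G rooted at r, and let X be a set of failed vertices with r ∉ X. If e is a back-edge of G (with respect to T) with both endpoints outside X, then either (i) the two endpoints of e lie in internal components of T \ X that are related as ancestor and descendant, or (ii) one endpoint of e lies in a hanging subtree H of T \ X and the other lies in a component of T \ X that is an ancestor of H. -/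
lemma anc_chain {V : Type*} (p : V → V) (X : Set V) (u w : V)
    (h : IsAnc p u w) (hw : w ∉ X) :
    (∃ f ∈ X, IsAnc p u f) ∨ (delVerts (treeGraph p) X).Reachable w u := by
  unfold IsAnc at h
  induction h using Relation.ReflTransGen.head_induction_on with
  | refl => exact Or.inr (SimpleGraph.Reachable.refl u)
  | @head a c hac hcu ih =>
    by_cases hcX : c ∈ X
    · exact Or.inl ⟨c, hcX, hcu⟩
    · rcases ih hcX with h1 | h2
      · exact Or.inl h1
      · by_cases hne : a = c
        · exact Or.inr (hne ▸ h2)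
        · refine Or.inr (SimpleGraph.Reachable.trans ?_ h2)
          refine SimpleGraph.Adj.reachable ?_
          simp only [delVerts, treeGraph, SimpleGraph.fromRel_adj]
          exact ⟨hne, Or.inl ⟨⟨hne, Or.inl hac⟩, hw, hcX⟩⟩

lemma helper_case {V : Type*} (p : V → V) (X : Set V) (u w : V)
    (hu : u ∉ X) (hw : w ∉ X) (hanc : IsAnc p u w) (Cu Cw : Set V)
    (hCu : IsCompOf (treeGraph p) X Cu) (huC : u ∈ Cu) (hwC : w ∈ Cw) :
    (IsInternal p X Cu ∧ IsInternal p X Cw ∧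
      (CompAnc p Cu Cw ∨ CompAnc p Cw Cu)) ∨
    (¬ IsInternal p X Cu ∧ CompAnc p Cw Cu) ∨
    (¬ IsInternal p X Cw ∧ CompAnc p Cu Cw) := by
  by_cases hICu : IsInternal p X Cu
  · by_cases hICw : IsInternal p X Cw
    · exact Or.inl ⟨hICu, hICw, Or.inl ⟨u, huC, w, hwC, hanc⟩⟩
    · exact Or.inr (Or.inr ⟨hICw, ⟨u, huC, w, hwC, hanc⟩⟩)
  · rcases anc_chain p X u w hanc hw with ⟨f, hfX, hf⟩ | hreach
    · exact absurd ⟨f, hfX, u, huC, hf⟩ hICu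
    · obtain ⟨v, hv, rfl⟩ := hCu
      have hwCu : w ∈ {x | (delVerts (treeGraph p) X).Reachable x v} :=
        hreach.trans huC
      exact Or.inr (Or.inl ⟨hICu, ⟨w, hwC, w, hwCu, Relation.ReflTransGen.refl⟩⟩)

/-- If `e = {u,w}` is a back-edge (non-tree edge) of `G` with both endpoints outside `X`,
then either the endpoints lie in internal components of `T \ X` related as ancestor and
descendant, or one endpoint lies in a hanging subtree and the component of the other
endpoint is an ancestor of it. -/
theorem back_edge_component_structure {V : Type*} [Fintype V] [DecidableEq V]
    (G : SimpleGraph V) (hG : G.Connected) (r : V) (T : DFSTree G r)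
    (X : Set V) (hr : r ∉ X)
    (u w : V) (hu : u ∉ X) (hw : w ∉ X) (hadj : G.Adj u w)
    (hnt : T.parent u ≠ w ∧ T.parent w ≠ u)
    (Cu Cw : Set V) (hCu : IsCompOf (treeGraph T.parent) X Cu)
    (hCw : IsCompOf (treeGraph T.parent) X Cw) (huC : u ∈ Cu) (hwC : w ∈ Cw) :
    (IsInternal T.parent X Cu ∧ IsInternal T.parent X Cw ∧
      (CompAnc T.parent Cu Cw ∨ CompAnc T.parent Cw Cu)) ∨
    (¬ IsInternal T.parent X Cu ∧ CompAnc T.parent Cw Cu) ∨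
    (¬ IsInternal T.parent X Cw ∧ CompAnc T.parent Cu Cw) := by
  have hne := hadj.ne
  rcases lt_trichotomy (T.num u) (T.num w) with hlt | heq | hgt
  · have hanc : IsAnc T.parent u w :=
      (T.subtree_interval u w).mpr ⟨le_of_lt hlt, T.dfs_prop u w hadj hlt⟩
    exact helper_case T.parent X u w hu hw hanc Cu Cw hCu huC hwC
  · exact absurd (T.num_inj heq) hne
  · have hanc : IsAnc T.parent w u :=
      (T.subtree_interval w u).mpr ⟨le_of_lt hgt, T.dfs_prop w u hadj.symm hgt⟩
    rcases helper_case T.parent X w u hw hu hanc Cw Cu hCw hwC huC with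
      ⟨h1, h2, h3⟩ | ⟨h1, h2⟩ | ⟨h1, h2⟩
    · exact Or.inl ⟨h2, h1, h3.symm⟩
    · exact Or.inr (Or.inr ⟨h1, h2⟩)
    · exact Or.inr (Or.inl ⟨h1, h2⟩)
end

section
/- Let T be a DFS tree of a connected graph G rooted at r, and X a set of failed vertices with r ∉ X. If a back-edge of G (with both endpoints outside X) has an endpoint in a hanging subtree H of T \ X, then the component containing its other endpoint is an internal component or else equals H itself; in particular, no back-edge connects two distinct hanging subtrees of T \ X. -/
lemma walk_up {V : Type*} (p : V → V) (X : Set V) {a b : V} (hab : IsAnc p a b)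
    (hb : b ∉ X) :
    (delVerts (treeGraph p) X).Reachable b a ∨ ∃ f ∈ X, IsAnc p a f := by
  unfold IsAnc at hab
  induction hab using Relation.ReflTransGen.head_induction_on with
  | refl => exact Or.inl (SimpleGraph.Reachable.refl a)
  | @head b c hbc rest ih =>
    by_cases hc : c ∈ X
    · exact Or.inr ⟨c, hc, rest⟩
    · rcases ih hc with h | h
      · by_cases hbc' : b = c
        · exact Or.inl (hbc' ▸ h)
        · refine Or.inl (SimpleGraph.Reachable.trans ?_ h)
          refine SimpleGraph.Adj.reachable ?_
          simp only [delVerts, treeGraph, SimpleGraph.fromRel_adj]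
          exact ⟨hbc', Or.inl ⟨⟨hbc', Or.inl hbc⟩, hb, hc⟩⟩
      · exact Or.inr h

lemma anc_of_adj {V : Type*} [Fintype V] {G : SimpleGraph V} {r : V} (T : DFSTree G r)
    {u w : V} (h : G.Adj u w) : IsAnc T.parent u w ∨ IsAnc T.parent w u := by
  rcases lt_trichotomy (T.num u) (T.num w) with h1 | h1 | h1
  · exact Or.inl ((T.subtree_interval u w).2 ⟨le_of_lt h1, T.dfs_prop u w h h1⟩)
  · exact absurd (T.num_inj h1) h.ne
  · exact Or.inr ((T.subtree_interval w u).2 ⟨le_of_lt h1, T.dfs_prop w u h.symm h1⟩)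

/-- If a back-edge of `G` (with endpoints outside `X`) has one endpoint in a hanging
subtree `H` of `T \ X`, then the component of its other endpoint is internal or equals `H`
itself; in particular, no back-edge connects two distinct hanging subtrees. -/
theorem back_edge_from_hanging_subtree {V : Type*} [Fintype V] [DecidableEq V]
    (G : SimpleGraph V) (hG : G.Connected) (r : V) (T : DFSTree G r)
    (X : Set V) (hr : r ∉ X)
    (H Cw : Set V) (hH : IsCompOf (treeGraph T.parent) X H)
    (hhang : ¬ IsInternal T.parent X H)
    (hCw : IsCompOf (treeGraph T.parent) X Cw)
    (u w : V) (hu : u ∈ H) (hw : w ∈ Cw) (huX : u ∉ X) (hwX : w ∉ X)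
    (hadj : G.Adj u w) (hnt : T.parent u ≠ w ∧ T.parent w ≠ u) :
    IsInternal T.parent X Cw ∨ Cw = H := by
  obtain ⟨v, hv, rfl⟩ := hH
  obtain ⟨v', hv', rfl⟩ := hCw
  simp only [Set.mem_setOf_eq] at hu hw
  have comp_eq : (delVerts (treeGraph T.parent) X).Reachable w u →
      ({x | (delVerts (treeGraph T.parent) X).Reachable x v'} : Set V) =
      {x | (delVerts (treeGraph T.parent) X).Reachable x v} := by
    intro hwu
    ext x
    simp only [Set.mem_setOf_eq]
    constructor
    · intro hx
      exact ((hx.trans hw.symm).trans hwu).trans hu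
    · intro hx
      exact ((hx.trans hu.symm).trans hwu.symm).trans hw
  rcases anc_of_adj T hadj with hanc | hanc
  · rcases walk_up T.parent X hanc hwX with hreach | ⟨f, hf, haf⟩
    · exact Or.inr (comp_eq hreach)
    · exact absurd ⟨f, hf, u, hu, haf⟩ hhang
  · rcases walk_up T.parent X hanc huX with hreach | ⟨f, hf, haf⟩
    · exact Or.inr (comp_eq hreach.symm)
    · exact Or.inl ⟨f, hf, w, hw, haf⟩
end

section
/- Let T be a DFS tree of a connected graph G rooted at r, and X a set of failed vertices with r ∉ X. Let C and C' be two distinct connected components of T \ X such that C' is an internal component that is an ancestor of C, and let b be the unique boundary vertex of C' that is a T-ancestor of C. Then there exists a back-edge of G between C and C' if and only if there exists a back-edge with one endpoint in C whose other (lower-depth) endpoint has DFS number in the interval [r_{C'}, p_T(b)] (where vertices are identified with DFS numbers). -/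
section Aux

variable {V : Type*}

lemma anc_rfl {p : V → V} {a : V} : IsAnc p a a := Relation.ReflTransGen.refl

lemma anc_trans {p : V → V} {a b c : V} (h1 : IsAnc p a b) (h2 : IsAnc p b c) :
    IsAnc p a c := Relation.ReflTransGen.trans h2 h1

lemma anc_parent (p : V → V) (b : V) : IsAnc p (p b) b := Relation.ReflTransGen.single rfl

lemma anc_of_ne {p : V → V} {y u : V} (h : IsAnc p y u) (hne : y ≠ u) :
    IsAnc p y (p u) := by
  rcases Relation.ReflTransGen.cases_head h with h' | ⟨c, hc, h'⟩
  · exact absurd h'.symm hne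
  · rwa [← hc] at h'

variable [Fintype V] {G : SimpleGraph V} {r : V}

lemma num_le_of_anc (T : DFSTree G r) {a b : V} (h : IsAnc T.parent a b) :
    T.num a ≤ T.num b :=
  ((T.subtree_interval a b).mp h).1

lemma anc_antisymm (T : DFSTree G r) {a b : V} (h1 : IsAnc T.parent a b)
    (h2 : IsAnc T.parent b a) : a = b :=
  T.num_inj (le_antisymm (num_le_of_anc T h1) (num_le_of_anc T h2))

lemma num_lt_of_anc (T : DFSTree G r) {a b : V} (h : IsAnc T.parent a b) (hne : a ≠ b) :
    T.num a < T.num b :=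
  lt_of_le_of_ne (num_le_of_anc T h) (fun he => hne (T.num_inj he))

lemma anc_of_num_le (T : DFSTree G r) {a b x : V} (ha : IsAnc T.parent a x)
    (hb : IsAnc T.parent b x) (hab : T.num a ≤ T.num b) : IsAnc T.parent a b := by
  have h1 := (T.subtree_interval a x).mp ha
  exact (T.subtree_interval a b).mpr ⟨hab, lt_of_le_of_lt (num_le_of_anc T hb) h1.2⟩

lemma edge_anc (T : DFSTree G r) {u w : V} (h : G.Adj u w) :
    IsAnc T.parent u w ∨ IsAnc T.parent w u := by
  rcases lt_trichotomy (T.num u) (T.num w) with hlt | heq | hgt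
  · exact Or.inl ((T.subtree_interval u w).mpr ⟨hlt.le, T.dfs_prop u w h hlt⟩)
  · left; have := T.num_inj heq; subst this; exact anc_rfl
  · exact Or.inr ((T.subtree_interval w u).mpr ⟨hgt.le, T.dfs_prop w u h.symm hgt⟩)

lemma delTree_adj {p : V → V} {X : Set V} {u v : V} :
    (delVerts (treeGraph p) X).Adj u v ↔
      u ≠ v ∧ u ∉ X ∧ v ∉ X ∧ (p u = v ∨ p v = u) := by
  simp only [delVerts, treeGraph, SimpleGraph.fromRel_adj]
  tauto

lemma mem_comp_notX {H : SimpleGraph V} {X C : Set V} (hC : IsCompOf H X C) {u : V}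
    (hu : u ∈ C) : u ∉ X := by
  obtain ⟨v, hv, rfl⟩ := hC
  intro huX
  obtain ⟨w⟩ := hu
  cases w with
  | nil => exact hv huX
  | cons h _ =>
    rw [delVerts, SimpleGraph.fromRel_adj] at h
    tauto

lemma comp_disjoint {H : SimpleGraph V} {X C C' : Set V} (hC : IsCompOf H X C)
    (hC' : IsCompOf H X C') (hne : C ≠ C') {x : V} (h1 : x ∈ C) (h2 : x ∈ C') : False := by
  obtain ⟨v, hv, rfl⟩ := hC
  obtain ⟨v', hv', rfl⟩ := hC'
  simp only [Set.mem_setOf_eq] at h1 h2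
  apply hne
  ext u
  simp only [Set.mem_setOf_eq]
  exact ⟨fun h => h.trans (h1.symm.trans h2), fun h => h.trans (h2.symm.trans h1)⟩

lemma anc_X_iff_of_adj {p : V → V} {X : Set V} {u v y : V}
    (h : (delVerts (treeGraph p) X).Adj u v) (hy : y ∈ X) :
    IsAnc p y u ↔ IsAnc p y v := by
  rw [delTree_adj] at h
  obtain ⟨hne, hu, hv, hor⟩ := h
  rcases hor with h1 | h1
  · subst h1
    constructor
    · intro ha
      exact anc_of_ne ha (fun he => hu (he ▸ hy))
    · intro ha
      exact anc_trans ha (anc_parent p u)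
  · subst h1
    constructor
    · intro ha
      exact anc_trans ha (anc_parent p v)
    · intro ha
      exact anc_of_ne ha (fun he => hv (he ▸ hy))

lemma anc_X_iff_of_reach {p : V → V} {X : Set V} {a c y : V}
    (h : (delVerts (treeGraph p) X).Reachable a c) (hy : y ∈ X) :
    IsAnc p y a ↔ IsAnc p y c := by
  obtain ⟨w⟩ := h
  induction w with
  | nil => exact Iff.rfl
  | cons hadj _ ih => exact (anc_X_iff_of_adj hadj hy).trans ih

lemma reach_of_between (T : DFSTree G r) {X : Set V} {rc' pb y : V} (hrc'X : rc' ∉ X)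
    (hrX : r ∉ X)
    (hreach : (delVerts (treeGraph T.parent) X).Reachable rc' pb)
    (h1 : IsAnc T.parent rc' y) (h2 : IsAnc T.parent y pb) :
    (delVerts (treeGraph T.parent) X).Reachable pb y := by
  have key : ∀ a, Relation.ReflTransGen (fun x z => T.parent x = z) a y →
      IsAnc T.parent a pb → (delVerts (treeGraph T.parent) X).Reachable a y := by
    intro a h
    induction h using Relation.ReflTransGen.head_induction_on with
    | refl => intro _; exact SimpleGraph.Reachable.refl y
    | head hstep hrest ih =>
      rename_i a c
      intro hapb
      have hya : IsAnc T.parent y a := Relation.ReflTransGen.head hstep hrest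
      by_cases hay : a = y
      · subst hay; exact SimpleGraph.Reachable.refl a
      · have har : a ≠ r := by
          intro h
          subst h
          exact hay (anc_antisymm T hya (T.reach_root y)).symm
        have haX : a ∉ X := by
          intro haX
          have h3 : IsAnc T.parent a rc' := (anc_X_iff_of_reach hreach haX).mpr hapb
          have h4 : IsAnc T.parent rc' a := anc_trans h1 hya
          exact hrc'X ((anc_antisymm T h3 h4) ▸ haX)
        have hca : IsAnc T.parent c a := by rw [← hstep]; exact anc_parent T.parent a
        have hcpb : IsAnc T.parent c pb := anc_trans hca hapb
        have hyc : IsAnc T.parent y c := hrest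
        have hcX : c ∉ X := by
          intro hcX
          have h3 : IsAnc T.parent c rc' := (anc_X_iff_of_reach hreach hcX).mpr hcpb
          have h4 : IsAnc T.parent rc' c := anc_trans h1 hyc
          exact hrc'X ((anc_antisymm T h3 h4) ▸ hcX)
        have hnum := T.parent_num a har
        have hnec : a ≠ c := by
          intro h
          rw [hstep, ← h] at hnum
          exact lt_irrefl _ hnum
        have hadj : (delVerts (treeGraph T.parent) X).Adj a c :=
          delTree_adj.mpr ⟨hnec, haX, hcX, Or.inl hstep⟩
        exact hadj.reachable.trans (ih hcpb)
  exact key pb h2 anc_rfl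

end Aux

/-- Kosinas' Lemma 8: for components `C`, `C'` of `T \ X` with `C'` internal and an
ancestor of `C`, and `b` the boundary vertex of `C'` that is an ancestor of `C`,
there is a back-edge from `C` to `C'` if and only if there is a back-edge from `C`
whose lower end has DFS number in the interval `[num r_{C'}, num p_T(b)]`. -/
theorem back_edge_to_internal_ancestor_iff {V : Type*} [Fintype V] [DecidableEq V]
    (G : SimpleGraph V) (hG : G.Connected) (r : V) (T : DFSTree G r)
    (X : Set V) (hr : r ∉ X)
    (C C' : Set V) (hC : IsCompOf (treeGraph T.parent) X C)
    (hC' : IsCompOf (treeGraph T.parent) X C') (hne : C ≠ C')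
    (hint : IsInternal T.parent X C') (hanc : CompAnc T.parent C' C)
    (rc rc' : V) (hrc : IsRootOf T.parent C rc) (hrc' : IsRootOf T.parent C' rc')
    (b : V) (hb : IsBoundary T.parent X C' b) (hbanc : IsAnc T.parent b rc) :
    (∃ x ∈ C, ∃ y ∈ C', G.Adj x y ∧ T.parent x ≠ y ∧ T.parent y ≠ x) ↔
    (∃ x ∈ C, ∃ y : V, G.Adj x y ∧ T.parent x ≠ y ∧ T.parent y ≠ x ∧
      T.num rc' ≤ T.num y ∧ T.num y ≤ T.num (T.parent b)) := by
  have hbX : b ∈ X := hb.1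
  have hpbC' : T.parent b ∈ C' := hb.2
  have hbr : b ≠ r := fun h => hr (h ▸ hbX)
  have hpbb : T.num (T.parent b) < T.num b := T.parent_num b hbr
  have hrc'pb : IsAnc T.parent rc' (T.parent b) := hrc'.2 _ hpbC'
  -- reachability between members of C'
  obtain ⟨v', hv', hC'eq⟩ := hC'
  have hC'r : IsCompOf (treeGraph T.parent) X C' := ⟨v', hv', hC'eq⟩
  have hreachC' : ∀ z ∈ C', ∀ w ∈ C', (delVerts (treeGraph T.parent) X).Reachable z w := by
    intro z hz w hw
    rw [hC'eq] at hz hw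
    exact SimpleGraph.Reachable.trans hz (SimpleGraph.Reachable.symm hw)
  have hreach : (delVerts (treeGraph T.parent) X).Reachable rc' (T.parent b) :=
    hreachC' _ hrc'.1 _ hpbC'
  -- b is not an ancestor of any vertex of C'
  have hbnot : ∀ z ∈ C', ¬ IsAnc T.parent b z := by
    intro z hz hanc
    have h3 : IsAnc T.parent b rc' :=
      (anc_X_iff_of_reach (hreachC' _ hrc'.1 _ hz) hbX).mpr hanc
    have := num_le_of_anc T h3
    have := num_le_of_anc T hrc'pb
    omega
  constructor
  · rintro ⟨x, hx, y, hy, hadj, ht1, ht2⟩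
    refine ⟨x, hx, y, hadj, ht1, ht2, num_le_of_anc T (hrc'.2 y hy), ?_⟩
    have hbx : IsAnc T.parent b x := anc_trans hbanc (hrc.2 x hx)
    have hyx : IsAnc T.parent y x := by
      rcases edge_anc T hadj with h | h
      · exact absurd (anc_trans hbx h) (hbnot y hy)
      · exact h
    have hyX : y ∉ X := mem_comp_notX hC'r hy
    rcases le_total (T.num b) (T.num y) with hle | hle
    · exact absurd (anc_of_num_le T hbx hyx hle) (hbnot y hy)
    · have hyb : IsAnc T.parent y b := anc_of_num_le T hyx hbx hle
      have hyneb : y ≠ b := fun h => hyX (h ▸ hbX)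
      exact num_le_of_anc T (anc_of_ne hyb hyneb)
  · rintro ⟨x, hx, y, hadj, ht1, ht2, hn1, hn2⟩
    refine ⟨x, hx, y, ?_, hadj, ht1, ht2⟩
    have hpbx : IsAnc T.parent (T.parent b) x :=
      anc_trans (anc_parent T.parent b) (anc_trans hbanc (hrc.2 x hx))
    have hpbnex : T.parent b ≠ x := fun h =>
      comp_disjoint hC hC'r hne hx (h ▸ hpbC')
    have hyx : IsAnc T.parent y x := by
      rcases edge_anc T hadj with h | h
      · have h1 : T.num x < T.num y := num_lt_of_anc T h hadj.ne
        have h2 : T.num (T.parent b) < T.num x := num_lt_of_anc T hpbx hpbnex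
        omega
      · exact h
    have hrc'y : IsAnc T.parent rc' y :=
      anc_of_num_le T (anc_trans hrc'pb hpbx) hyx hn1
    have hypb : IsAnc T.parent y (T.parent b) := anc_of_num_le T hyx hpbx hn2
    have hreach2 := reach_of_between T (mem_comp_notX hC'r hrc'.1) hr hreach hrc'y hypb
    rw [hC'eq]
    rw [hC'eq] at hpbC'
    exact SimpleGraph.Reachable.trans hreach2.symm hpbC'
end

section
/- With M defined as above, if two representatives S_M and S'_M are connected in M, then the corresponding sets S and S' are connected in G \ D. (Soundness direction: every edge of M of each of the six types certifies connectivity in G \ D between the corresponding components/vertices.) -/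
/-- A DFS tree of the subgraph of `G` induced on the vertex set `S`, rooted at `r`:
parent function, DFS (preorder) numbers `num`, descendant counts `nd`.  `dfs_prop` is the
defining property of depth-first search. -/
structure DFSTreeOn {V : Type*} [Fintype V] (G : SimpleGraph V) (S : Set V) (r : V) where
  parent : V → V
  num : V → ℕ
  nd : V → ℕ
  root_mem : r ∈ S
  parent_root : parent r = r
  parent_mem : ∀ v ∈ S, parent v ∈ S
  num_inj : Function.Injective num
  parent_adj : ∀ v ∈ S, v ≠ r → G.Adj (parent v) v
  parent_num : ∀ v ∈ S, v ≠ r → num (parent v) < num v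
  reach_root : ∀ v ∈ S, IsAnc parent r v
  nd_def : ∀ v ∈ S, Set.ncard {u | u ∈ S ∧ IsAnc parent v u} = nd v
  subtree_interval : ∀ u ∈ S, ∀ v ∈ S,
    (IsAnc parent u v ↔ (num u ≤ num v ∧ num v < num u + nd u))
  dfs_prop : ∀ u ∈ S, ∀ w ∈ S, G.Adj u w → num u < num w → num w < num u + nd u

/-- The tree with parent function `p` on the vertex set `S`, regarded as a graph. -/
def treeGraphOn {V : Type*} (p : V → V) (S : Set V) : SimpleGraph V :=
  SimpleGraph.fromRel (fun x y => x ∈ S ∧ y ∈ S ∧ p x = y)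

/-- `C` is a connected component of `T \ X`, for the tree on vertex set `S`. -/
def IsCompOn {V : Type*} (p : V → V) (S X C : Set V) : Prop :=
  ∃ v ∈ S, v ∉ X ∧ C = {u | (delVerts (treeGraphOn p S) X).Reachable u v}

/-- `C` is an internal component of `T \ X`. -/
def IsIntC {V : Type*} (p : V → V) (S X C : Set V) : Prop :=
  IsCompOn p S X C ∧ IsInternal p X C

/-- `C` is a hanging subtree of `T \ X`. -/
def IsHang {V : Type*} (p : V → V) (S X C : Set V) : Prop :=
  IsCompOn p S X C ∧ ¬ IsInternal p X C

/-- There is a back-edge (non-tree edge of `G`) with one end in `A` and the other in `B`. -/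
def BackE {V : Type*} (G : SimpleGraph V) (p : V → V) (A B : Set V) : Prop :=
  ∃ x ∈ A, ∃ y ∈ B, G.Adj x y ∧ p x ≠ y ∧ p y ≠ x

/-- Some edge of `G` joins the vertex `u` to the set `A`. -/
def EdgeToSet {V : Type*} (G : SimpleGraph V) (u : V) (A : Set V) : Prop :=
  ∃ x ∈ A, G.Adj u x

/-- The edge relation of the connectivity graph `M`, with the six edge types:
(1) a back-edge between two internal components; (2) a hanging subtree with back-edges to
internal components `C₁, …, C_k`, `C_k` most ancestral, gives edges `(r_{C_k}, r_{C_i})`;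
(3) an edge of `G` between two vertices of `U = D̂ \ D`; (4) an edge of `G` between a
vertex of `U` and an internal component; (5) two vertices of `U` joined to a common
hanging subtree; (6) a vertex of `U` and an internal component joined to a common hanging
subtree. -/
def MRel {V : Type*} (G : SimpleGraph V) (p : V → V) (S X U : Set V) (a b : V) : Prop :=
  (∃ C₁ C₂, IsIntC p S X C₁ ∧ IsIntC p S X C₂ ∧ IsRootOf p C₁ a ∧ IsRootOf p C₂ b ∧
    BackE G p C₁ C₂) ∨
  (∃ H Ck Ci, IsHang p S X H ∧ IsIntC p S X Ck ∧ IsIntC p S X Ci ∧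
    IsRootOf p Ck a ∧ IsRootOf p Ci b ∧ BackE G p H Ck ∧ BackE G p H Ci ∧
    (∀ C', IsIntC p S X C' → BackE G p H C' → CompAnc p Ck C')) ∨
  (a ∈ U ∧ b ∈ U ∧ G.Adj a b) ∨
  (∃ C, IsIntC p S X C ∧ IsRootOf p C a ∧ b ∈ U ∧ EdgeToSet G b C) ∨
  (a ∈ U ∧ b ∈ U ∧ ∃ H, IsHang p S X H ∧ EdgeToSet G a H ∧ EdgeToSet G b H) ∨
  (∃ C H, IsIntC p S X C ∧ IsRootOf p C a ∧ IsHang p S X H ∧ BackE G p C H ∧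
    b ∈ U ∧ EdgeToSet G b H)

/-- The connectivity graph `M`. -/
def MGraph {V : Type*} (G : SimpleGraph V) (p : V → V) (S X U : Set V) : SimpleGraph V :=
  SimpleGraph.fromRel (MRel G p S X U)

/-- `a` is the representative vertex in `M` of `A`, where `A` is either an internal
component of `T \ X` (represented by its root) or a singleton of a vertex of `U`. -/
def IsRep {V : Type*} (p : V → V) (S X U : Set V) (A : Set V) (a : V) : Prop :=
  (IsIntC p S X A ∧ IsRootOf p A a) ∨ (a ∈ U ∧ A = {a})

section AuxSound

variable {V : Type*} [Fintype V]

lemma adj_del {G : SimpleGraph V} {D : Set V} {x y : V} (h : G.Adj x y)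
    (hx : x ∉ D) (hy : y ∉ D) : (delVerts G D).Adj x y := by
  unfold delVerts
  rw [SimpleGraph.fromRel_adj]
  exact ⟨h.ne, Or.inl ⟨h, hx, hy⟩⟩

lemma delTree_adj_s12 {p : V → V} {Dhat D : Set V} {x y : V}
    (h : (delVerts (treeGraphOn p Dhatᶜ) (D \ Dhat)).Adj x y) :
    x ∉ Dhat ∧ x ∉ D ∧ y ∉ Dhat ∧ y ∉ D ∧ x ≠ y ∧ (p x = y ∨ p y = x) := by
  unfold delVerts treeGraphOn at h
  rw [SimpleGraph.fromRel_adj] at h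
  obtain ⟨hne, h | h⟩ := h <;>
  · obtain ⟨hadj, hx, hy⟩ := h
    rw [SimpleGraph.fromRel_adj] at hadj
    simp only [Set.mem_diff, Set.mem_compl_iff, not_and, not_not] at hx hy
    obtain ⟨_, hp | hp⟩ := hadj <;>
    · obtain ⟨h1, h2, h3⟩ := hp
      simp only [Set.mem_compl_iff] at h1 h2
      refine ⟨?_, ?_, ?_, ?_, hne, ?_⟩ <;> tauto

lemma comp_subset {p : V → V} {Dhat D C : Set V}
    (hC : IsCompOn p Dhatᶜ (D \ Dhat) C) : ∀ u ∈ C, u ∉ Dhat ∧ u ∉ D := by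
  obtain ⟨v, hvS, hvX, rfl⟩ := hC
  intro u hu
  have hu' : (delVerts (treeGraphOn p Dhatᶜ) (D \ Dhat)).Reachable u v := hu
  obtain ⟨w⟩ := hu'
  cases w with
  | nil =>
      simp only [Set.mem_compl_iff] at hvS
      simp only [Set.mem_diff, not_and, not_not] at hvX
      exact ⟨hvS, fun hD => hvS (hvX hD)⟩
  | cons h q =>
      obtain ⟨h1, h2, _⟩ := delTree_adj_s12 h
      exact ⟨h1, h2⟩

lemma isCompOn_eq {p : V → V} {S X C₁ C₂ : Set V} (h1 : IsCompOn p S X C₁)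
    (h2 : IsCompOn p S X C₂) {a : V} (ha1 : a ∈ C₁) (ha2 : a ∈ C₂) : C₁ = C₂ := by
  obtain ⟨v₁, _, _, rfl⟩ := h1
  obtain ⟨v₂, _, _, rfl⟩ := h2
  have ha1' : (delVerts (treeGraphOn p S) X).Reachable a v₁ := ha1
  have ha2' : (delVerts (treeGraphOn p S) X).Reachable a v₂ := ha2
  ext u
  constructor
  · intro hu
    have hu' : (delVerts (treeGraphOn p S) X).Reachable u v₁ := hu
    exact (hu'.trans ha1'.symm).trans ha2'
  · intro hu
    have hu' : (delVerts (treeGraphOn p S) X).Reachable u v₂ := hu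
    exact (hu'.trans ha2'.symm).trans ha1'

variable {G : SimpleGraph V} {Dhat D : Set V} {r : V}

lemma comp_reach (T : DFSTreeOn G Dhatᶜ r) {C : Set V}
    (hC : IsCompOn T.parent Dhatᶜ (D \ Dhat) C) :
    ∀ u ∈ C, ∀ w ∈ C, (delVerts G D).Reachable u w := by
  have hle : delVerts (treeGraphOn T.parent Dhatᶜ) (D \ Dhat) ≤ delVerts G D := by
    intro x y h
    obtain ⟨hx1, hx2, hy1, hy2, hne, hp⟩ := delTree_adj_s12 h
    have hadj : G.Adj x y := by
      rcases hp with hp | hp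
      · have hxr : x ≠ r := by
          rintro rfl
          rw [T.parent_root] at hp
          exact hne hp
        have := T.parent_adj x hx1 hxr
        rw [hp] at this
        exact this.symm
      · have hyr : y ≠ r := by
          rintro rfl
          rw [T.parent_root] at hp
          exact hne hp.symm
        have := T.parent_adj y hy1 hyr
        rw [hp] at this
        exact this
    exact adj_del hadj hx2 hy2
  obtain ⟨v, hv, hvx, rfl⟩ := hC
  intro u hu w hw
  have hu' : (delVerts (treeGraphOn T.parent Dhatᶜ) (D \ Dhat)).Reachable u v := hu
  have hw' : (delVerts (treeGraphOn T.parent Dhatᶜ) (D \ Dhat)).Reachable w v := hw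
  exact (hu'.mono hle).trans (hw'.mono hle).symm

lemma rep_mem {p : V → V} {A : Set V} {a : V}
    (hA : IsRep p Dhatᶜ (D \ Dhat) (Dhat \ D) A a) : a ∈ A := by
  rcases hA with ⟨_, hroot⟩ | ⟨_, rfl⟩
  · exact hroot.1
  · rfl

lemma rep_unique {p : V → V} {A B : Set V} {a : V}
    (hA : IsRep p Dhatᶜ (D \ Dhat) (Dhat \ D) A a)
    (hB : IsRep p Dhatᶜ (D \ Dhat) (Dhat \ D) B a) : A = B := by
  rcases hA with ⟨hAc, hAr⟩ | ⟨hAu, rfl⟩ <;> rcases hB with ⟨hBc, hBr⟩ | ⟨hBu, h⟩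
  · exact isCompOn_eq hAc.1 hBc.1 hAr.1 hBr.1
  · exact absurd hBu.1 (comp_subset hAc.1 a hAr.1).1
  · exact absurd hAu.1 (comp_subset hBc.1 a hBr.1).1
  · rw [h]

lemma rep_reach (T : DFSTreeOn G Dhatᶜ r) {A : Set V} {a : V}
    (hA : IsRep T.parent Dhatᶜ (D \ Dhat) (Dhat \ D) A a) :
    ∀ x ∈ A, ∀ y ∈ A, (delVerts G D).Reachable x y := by
  rcases hA with ⟨hAc, _⟩ | ⟨_, rfl⟩
  · exact comp_reach T hAc.1
  · rintro x rfl y rfl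
    exact SimpleGraph.Reachable.refl _

lemma mrel_sound (T : DFSTreeOn G Dhatᶜ r) {b c : V}
    (h : MRel G T.parent Dhatᶜ (D \ Dhat) (Dhat \ D) b c) :
    ∃ B C, IsRep T.parent Dhatᶜ (D \ Dhat) (Dhat \ D) B b ∧
      IsRep T.parent Dhatᶜ (D \ Dhat) (Dhat \ D) C c ∧
      ∃ x ∈ B, ∃ y ∈ C, (delVerts G D).Reachable x y := by
  rcases h with ⟨C₁, C₂, h1, h2, hr1, hr2, x, hx, y, hy, hadj, -, -⟩ |
    ⟨H, Ck, Ci, hH, hk, hi, hrk, hri, ⟨x₁, hx₁, y₁, hy₁, ha1, -, -⟩,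
      ⟨x₂, hx₂, y₂, hy₂, ha2, -, -⟩, -⟩ |
    ⟨hb, hc, hadj⟩ | ⟨C, hC, hrC, hc, x, hx, hadj⟩ |
    ⟨hb, hc, H, hH, ⟨x, hx, hadjb⟩, ⟨y, hy, hadjc⟩⟩ |
    ⟨C, H, hC, hrC, hH, ⟨x, hx, y, hy, hadj, -, -⟩, hc, z, hz, hadjc⟩
  · exact ⟨C₁, C₂, Or.inl ⟨h1, hr1⟩, Or.inl ⟨h2, hr2⟩, x, hx, y, hy,
      (adj_del hadj (comp_subset h1.1 x hx).2 (comp_subset h2.1 y hy).2).reachable⟩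
  · refine ⟨Ck, Ci, Or.inl ⟨hk, hrk⟩, Or.inl ⟨hi, hri⟩, y₁, hy₁, y₂, hy₂, ?_⟩
    have e1 := (adj_del ha1 (comp_subset hH.1 x₁ hx₁).2 (comp_subset hk.1 y₁ hy₁).2).reachable
    have e2 := (adj_del ha2 (comp_subset hH.1 x₂ hx₂).2 (comp_subset hi.1 y₂ hy₂).2).reachable
    exact e1.symm.trans ((comp_reach T hH.1 x₁ hx₁ x₂ hx₂).trans e2)
  · exact ⟨{b}, {c}, Or.inr ⟨hb, rfl⟩, Or.inr ⟨hc, rfl⟩, b, rfl, c, rfl,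
      (adj_del hadj hb.2 hc.2).reachable⟩
  · exact ⟨C, {c}, Or.inl ⟨hC, hrC⟩, Or.inr ⟨hc, rfl⟩, x, hx, c, rfl,
      (adj_del hadj hc.2 (comp_subset hC.1 x hx).2).reachable.symm⟩
  · refine ⟨{b}, {c}, Or.inr ⟨hb, rfl⟩, Or.inr ⟨hc, rfl⟩, b, rfl, c, rfl, ?_⟩
    have e1 := (adj_del hadjb hb.2 (comp_subset hH.1 x hx).2).reachable
    have e2 := (adj_del hadjc hc.2 (comp_subset hH.1 y hy).2).reachable
    exact e1.trans ((comp_reach T hH.1 x hx y hy).trans e2.symm)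
  · refine ⟨C, {c}, Or.inl ⟨hC, hrC⟩, Or.inr ⟨hc, rfl⟩, x, hx, c, rfl, ?_⟩
    have e1 := (adj_del hadj (comp_subset hC.1 x hx).2 (comp_subset hH.1 y hy).2).reachable
    have e2 := (adj_del hadjc hc.2 (comp_subset hH.1 z hz).2).reachable
    exact e1.trans ((comp_reach T hH.1 y hy z hz).trans e2.symm)

end AuxSound

/-- Soundness of the connectivity graph `M`: if the representatives of `S` and `S'` are
connected in `M`, then `S` and `S'` are connected in `G \ D`. -/
theorem connectivity_graph_sound {V : Type*} [Fintype V] [DecidableEq V]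
    (G : SimpleGraph V) (Dhat D : Set V) (r : V)
    (hconn : ∀ u ∉ Dhat, ∀ v ∉ Dhat, (delVerts G Dhat).Reachable u v)
    (hr : r ∉ D) (T : DFSTreeOn G Dhatᶜ r)
    (A A' : Set V) (a a' : V)
    (hA : IsRep T.parent Dhatᶜ (D \ Dhat) (Dhat \ D) A a)
    (hA' : IsRep T.parent Dhatᶜ (D \ Dhat) (Dhat \ D) A' a')
    (hM : (MGraph G T.parent Dhatᶜ (D \ Dhat) (Dhat \ D)).Reachable a a') :
    ∃ x ∈ A, ∃ y ∈ A', (delVerts G D).Reachable x y := by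
  suffices h : ∀ a'', Relation.ReflTransGen
      (MGraph G T.parent Dhatᶜ (D \ Dhat) (Dhat \ D)).Adj a a'' →
      ∀ B, IsRep T.parent Dhatᶜ (D \ Dhat) (Dhat \ D) B a'' →
      ∃ x ∈ A, ∃ y ∈ B, (delVerts G D).Reachable x y by
    refine h a' ?_ A' hA'
    rwa [SimpleGraph.reachable_iff_reflTransGen] at hM
  intro a'' hsteps
  induction hsteps with
  | refl =>
      intro B hB
      obtain rfl := rep_unique hA hB
      exact ⟨a, rep_mem hA, a, rep_mem hA, SimpleGraph.Reachable.refl _⟩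
  | tail _ hadj ih =>
      intro Bset hB
      have hadj' := hadj
      unfold MGraph at hadj'
      rw [SimpleGraph.fromRel_adj] at hadj'
      obtain ⟨hne, hrel | hrel⟩ := hadj'
      · obtain ⟨B', C', hB', hC', x, hxB, y, hyC, hxy⟩ := mrel_sound T hrel
        obtain rfl := rep_unique hC' hB
        obtain ⟨x₀, hx₀, y₀, hy₀, h₀⟩ := ih B' hB'
        exact ⟨x₀, hx₀, y, hyC, h₀.trans ((rep_reach T hB' y₀ hy₀ x hxB).trans hxy)⟩
      · obtain ⟨C', B', hC', hB', y, hyC, x, hxB, hxy⟩ := mrel_sound T hrel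
        obtain rfl := rep_unique hC' hB
        obtain ⟨x₀, hx₀, y₀, hy₀, h₀⟩ := ih B' hB'
        exact ⟨x₀, hx₀, y, hyC, h₀.trans ((rep_reach T hB' y₀ hy₀ x hxB).trans hxy.symm)⟩
end

section
/- Let T be a DFS tree of a connected graph G rooted at r, X a set of failed vertices with r ∉ X, and s, t two vertices not in X lying in hanging subtrees H_s, H_t of T \ X respectively. Suppose neither H_s nor H_t has any edge in G \ X to a vertex outside itself (no back-edge to an internal component and no edge to any other surviving vertex). Then s and t are connected in G \ X if and only if H_s = H_t. -/
/-- If `s` and `t` lie in hanging subtrees `H_s`, `H_t` of `T \ X` that have no edges of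
`G \ X` leaving them, then `s` and `t` are connected in `G \ X` iff `H_s = H_t`. -/
theorem isolated_hanging_subtrees_query {V : Type*} [Fintype V] [DecidableEq V]
    (G : SimpleGraph V) (hG : G.Connected) (r : V) (T : DFSTree G r)
    (X : Set V) (hr : r ∉ X)
    (s t : V) (hs : s ∉ X) (ht : t ∉ X)
    (Hs Ht : Set V)
    (hHs : IsCompOf (treeGraph T.parent) X Hs) (hsHang : ¬ IsInternal T.parent X Hs)
    (hHt : IsCompOf (treeGraph T.parent) X Ht) (htHang : ¬ IsInternal T.parent X Ht)
    (hsm : s ∈ Hs) (htm : t ∈ Ht)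
    (hiso_s : ∀ x ∈ Hs, ∀ y : V, y ∉ X → G.Adj x y → y ∈ Hs)
    (hiso_t : ∀ x ∈ Ht, ∀ y : V, y ∉ X → G.Adj x y → y ∈ Ht) :
    (delVerts G X).Reachable s t ↔ Hs = Ht := by
  obtain ⟨v, hv, hvC⟩ := hHs
  obtain ⟨w, hw, hwC⟩ := hHt
  constructor
  · intro hreach
    obtain ⟨walk⟩ := hreach
    have key : ∀ {a b : V} (wk : (delVerts G X).Walk a b), a ∈ Hs → b ∈ Hs := by
      intro a b wk
      induction wk with
      | nil => exact id
      | cons h _ ih =>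
        intro ha
        apply ih
        rw [delVerts, SimpleGraph.fromRel_adj] at h
        rcases h.2 with ⟨hadj, _, hy⟩ | ⟨hadj, hy, _⟩
        · exact hiso_s _ ha _ hy hadj
        · exact hiso_s _ ha _ hy hadj.symm
    have htHs : t ∈ Hs := key walk hsm
    have h1 : (delVerts (treeGraph T.parent) X).Reachable t v := by
      rw [hvC] at htHs; exact htHs
    have h2 : (delVerts (treeGraph T.parent) X).Reachable t w := by
      rw [hwC] at htm; exact htm
    rw [hvC, hwC]
    ext u
    exact ⟨fun hu => (hu.trans h1.symm).trans h2, fun hu => (hu.trans h2.symm).trans h1⟩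
  · intro hEq
    have hle : delVerts (treeGraph T.parent) X ≤ delVerts G X := by
      intro x y hxy
      rw [delVerts, SimpleGraph.fromRel_adj] at hxy ⊢
      obtain ⟨hne, h⟩ := hxy
      refine ⟨hne, ?_⟩
      rcases h with ⟨htree, hx, hy⟩ | ⟨htree, hy, hx⟩
      · left
        refine ⟨?_, hx, hy⟩
        rw [treeGraph, SimpleGraph.fromRel_adj] at htree
        rcases htree.2 with hp | hp
        · have hxr : x ≠ r := by rintro rfl; exact htree.1 (hp ▸ T.parent_root).symm
          exact (hp ▸ T.parent_adj x hxr).symm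
        · have hyr : y ≠ r := by rintro rfl; exact htree.1.symm (hp ▸ T.parent_root).symm
          exact hp ▸ T.parent_adj y hyr
      · right
        refine ⟨?_, hy, hx⟩
        rw [treeGraph, SimpleGraph.fromRel_adj] at htree
        rcases htree.2 with hp | hp
        · have hyr : y ≠ r := by rintro rfl; exact htree.1 (hp ▸ T.parent_root).symm
          exact (hp ▸ T.parent_adj y hyr).symm
        · have hxr : x ≠ r := by rintro rfl; exact htree.1.symm (hp ▸ T.parent_root).symm
          exact hp ▸ T.parent_adj x hxr
    have hs' : (delVerts (treeGraph T.parent) X).Reachable s v := by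
      rw [hvC] at hsm; exact hsm
    have ht' : (delVerts (treeGraph T.parent) X).Reachable t v := by
      have htHs : t ∈ Hs := hEq ▸ htm
      rw [hvC] at htHs; exact htHs
    exact (hs'.trans ht'.symm).mono hle
end
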